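/- Suppose that for all v ∈ (vᴹ, v̄) the condition v·f(v)/(1 − F(v)) + v·G'(v)/G(v) ≥ 2 holds. Then the posted price p(k) := ϑ(k)·(1 − k/F(ϑ(k))) is non-increasing in k on (0,1); consequently, for every k ∈ (0,1) and every type v > ϑ(k), the consumer surplus U(v,k) = v − p(k) is nondecreasing in k. -/

import Mathlib

/-!
Integrating `d/ds [-s (1 - F s)] = φ(s) f(s)` gives `∫_v^{v̄} φ f = v (1 - F v)`, so
`G = φ F + v (1 - F)`, and the first-order condition `k G(ϑ) = φ(ϑ) F(ϑ)²` turns the price into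
`p(k) = H(ϑ(k))` with `H(v) = v² (1 - F v) / G v`. Since `H'/H = 2/v - f/(1 - F) - G'/G`, the
hypothesis says exactly that `H` is antitone on `(vᴹ, v̄)`. Finally `ϑ` is increasing: for
`k₁ < k₂`, the function `k₂ G - φ F²` is positive at `ϑ(k₁)` and nonpositive at `v̄`, so its unique
root `ϑ(k₂)` lies to the right of `ϑ(k₁)`.
-/

open Set MeasureTheory

/-- The virtual value function `φ(v) = v - (1 - F v) / f v`. -/
noncomputable def phi (F f : ℝ → ℝ) (v : ℝ) : ℝ := v - (1 - F v) / f v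

/-- The function `G(v) = φ(v)·F(v) + ∫_v^{v̄} φ(s)·f(s) ds`. -/
noncomputable def Gfun (F f : ℝ → ℝ) (vhi : ℝ) (v : ℝ) : ℝ :=
  phi F f v * F v + ∫ s in v..vhi, phi F f s * f s

theorem strictMonoOn_Icc_of_hasDerivAt_pos {F f : ℝ → ℝ} {a b : ℝ}
    (hF : ∀ x ∈ Icc a b, HasDerivAt F (f x) x) (hf : ∀ x ∈ Icc a b, 0 < f x) :
    StrictMonoOn F (Icc a b) :=
  strictMonoOn_of_hasDerivWithinAt_pos (convex_Icc a b)
    (fun x hx => (hF x hx).continuousAt.continuousWithinAt)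
    (fun x hx => (hF x (interior_subset hx)).hasDerivWithinAt)
    (fun x hx => hf x (interior_subset hx))

theorem antitoneOn_sq_mul_one_sub_div {F f G : ℝ → ℝ} {a b : ℝ}
    (hF : ∀ x ∈ Ioo a b, HasDerivAt F (f x) x) (hG : DifferentiableOn ℝ G (Ioo a b))
    (hx : ∀ x ∈ Ioo a b, 0 ≤ x) (hF1 : ∀ x ∈ Ioo a b, F x < 1) (hG0 : ∀ x ∈ Ioo a b, 0 < G x)
    (hcond : ∀ x ∈ Ioo a b, x * f x / (1 - F x) + x * deriv G x / G x ≥ 2) :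
    AntitoneOn (fun x => x ^ 2 * (1 - F x) / G x) (Ioo a b) := by
  have hderiv : ∀ x ∈ Ioo a b, HasDerivAt (fun x => x ^ 2 * (1 - F x) / G x)
      (((2 * x * (1 - F x) - x ^ 2 * f x) * G x - x ^ 2 * (1 - F x) * deriv G x) / G x ^ 2) x := by
    intro x hx'
    refine (((hasDerivAt_pow 2 x).mul ((hasDerivAt_const x (1 : ℝ)).sub (hF x hx'))).div
      (hG.differentiableAt (Ioo_mem_nhds hx'.1 hx'.2)).hasDerivAt (hG0 x hx').ne').congr_deriv ?_
    simp only [Pi.mul_apply, Pi.sub_apply]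
    ring
  refine antitoneOn_of_deriv_nonpos (convex_Ioo a b)
    (fun x hx' => (hderiv x hx').continuousAt.continuousWithinAt) ?_ ?_ <;> rw [interior_Ioo]
  · exact fun x hx' => (hderiv x hx').differentiableAt.differentiableWithinAt
  intro x hx'
  rw [(hderiv x hx').deriv]
  have h1F : 0 < 1 - F x := sub_pos.2 (hF1 x hx')
  have hGx := hG0 x hx'
  have key := hcond x hx'
  rw [ge_iff_le, div_add_div _ _ h1F.ne' hGx.ne', le_div_iff₀ (mul_pos h1F hGx)] at key
  apply div_nonpos_of_nonpos_of_nonneg _ (sq_nonneg _)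
  nlinarith [hx x hx']

theorem strictMonoOn_of_unique_root {g K θ : ℝ → ℝ} {a b : ℝ} {s : Set ℝ}
    (hg : ContinuousOn g (Icc a b)) (hK : ContinuousOn K (Icc a b))
    (hθ : ∀ k ∈ s, θ k ∈ Icc a b ∧ 0 < g (θ k) ∧ k * g (θ k) = K (θ k))
    (hb : ∀ k ∈ s, k * g b ≤ K b) (huniq : ∀ k ∈ s, ∀ v ∈ Icc a b, k * g v = K v → v = θ k) :
    StrictMonoOn θ s := by
  intro k₁ hk₁ k₂ hk₂ hk
  obtain ⟨hθ₁, hg₁, hroot₁⟩ := hθ k₁ hk₁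
  have hsub : Icc (θ k₁) b ⊆ Icc a b := Icc_subset_Icc_left hθ₁.1
  have hcont : ContinuousOn (fun v => k₂ * g v - K v) (Icc (θ k₁) b) :=
    ((continuousOn_const.mul hg).sub hK).mono hsub
  obtain ⟨v, hv, hv0⟩ := intermediate_value_Icc' hθ₁.2 hcont
    (show (0 : ℝ) ∈ Icc (k₂ * g b - K b) (k₂ * g (θ k₁) - K (θ k₁)) by
      constructor <;> nlinarith [hb k₂ hk₂])
  obtain rfl := huniq k₂ hk₂ v (hsub hv) (sub_eq_zero.1 hv0)
  refine hv.1.lt_of_ne fun h => ?_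
  rw [← h] at hv0
  nlinarith

theorem price_eq_of_foc {v k F φ G : ℝ} (hF : F ≠ 0) (hG : G ≠ 0) (hfoc : k * G = φ * F ^ 2)
    (hGeq : G = φ * F + v * (1 - F)) : v * (1 - k / F) = v ^ 2 * (1 - F) / G := by
  field_simp
  linear_combination v * F * hGeq - v * hfoc

section VirtualValue

variable {F f : ℝ → ℝ}

theorem continuousOn_phi {s : Set ℝ} (hF : ContinuousOn F s) (hf : ContinuousOn f s)
    (hf0 : ∀ x ∈ s, f x ≠ 0) : ContinuousOn (phi F f) s :=
  continuousOn_id.sub ((continuousOn_const.sub hF).div hf hf0)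

theorem differentiableAt_phi {x : ℝ} (hF : DifferentiableAt ℝ F x) (hf : DifferentiableAt ℝ f x)
    (hf0 : f x ≠ 0) : DifferentiableAt ℝ (phi F f) x :=
  differentiableAt_id.sub (((differentiableAt_const _).sub hF).div hf hf0)

theorem hasDerivAt_neg_mul_one_sub {x : ℝ} (hF : HasDerivAt F (f x) x) (hf0 : f x ≠ 0) :
    HasDerivAt (fun t => -(t * (1 - F t))) (phi F f x * f x) x := by
  refine (((hasDerivAt_id x).mul ((hasDerivAt_const x (1 : ℝ)).sub hF)).neg).congr_deriv ?_
  simp only [phi, id, Pi.sub_apply]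
  field_simp
  ring

variable {vhi : ℝ}

theorem integral_phi_mul {v : ℝ} (hv : v ≤ vhi) (hF : ∀ s ∈ Icc v vhi, HasDerivAt F (f s) s)
    (hf : ContinuousOn f (Icc v vhi)) (hf0 : ∀ s ∈ Icc v vhi, f s ≠ 0) (hFhi : F vhi = 1) :
    ∫ s in v..vhi, phi F f s * f s = v * (1 - F v) := by
  have hFc : ContinuousOn F (Icc v vhi) := fun s hs => (hF s hs).continuousAt.continuousWithinAt
  rw [← uIcc_of_le hv] at hF hf hf0 hFc
  rw [intervalIntegral.integral_eq_sub_of_hasDerivAt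
      (fun s hs => hasDerivAt_neg_mul_one_sub (hF s hs) (hf0 s hs))
      (((continuousOn_phi hFc hf hf0).mul hf).intervalIntegrable), hFhi]
  ring

theorem eqOn_Gfun {a : ℝ} (hF : ∀ s ∈ Icc a vhi, HasDerivAt F (f s) s)
    (hf : ContinuousOn f (Icc a vhi)) (hf0 : ∀ s ∈ Icc a vhi, f s ≠ 0) (hFhi : F vhi = 1) :
    EqOn (Gfun F f vhi) (fun v => phi F f v * F v + v * (1 - F v)) (Icc a vhi) := by
  intro v hv
  have hsub : Icc v vhi ⊆ Icc a vhi := Icc_subset_Icc_left hv.1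
  rw [Gfun, integral_phi_mul hv.2 (fun s hs => hF s (hsub hs)) (hf.mono hsub)
    (fun s hs => hf0 s (hsub hs)) hFhi]

theorem continuousOn_Gfun {a : ℝ} (hF : ∀ s ∈ Icc a vhi, HasDerivAt F (f s) s)
    (hf : ContinuousOn f (Icc a vhi)) (hf0 : ∀ s ∈ Icc a vhi, f s ≠ 0) (hFhi : F vhi = 1) :
    ContinuousOn (Gfun F f vhi) (Icc a vhi) := by
  have hFc : ContinuousOn F (Icc a vhi) := fun s hs => (hF s hs).continuousAt.continuousWithinAt
  exact (((continuousOn_phi hFc hf hf0).mul hFc).add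
    (continuousOn_id.mul (continuousOn_const.sub hFc))).congr (eqOn_Gfun hF hf hf0 hFhi)

theorem differentiableAt_Gfun {a x : ℝ} (hF : ∀ s ∈ Icc a vhi, HasDerivAt F (f s) s)
    (hf : DifferentiableOn ℝ f (Icc a vhi)) (hf0 : ∀ s ∈ Icc a vhi, f s ≠ 0) (hFhi : F vhi = 1)
    (hx : x ∈ Ioo a vhi) : DifferentiableAt ℝ (Gfun F f vhi) x := by
  have hnhds : Icc a vhi ∈ nhds x := Icc_mem_nhds hx.1 hx.2
  have hFx := (hF x (Ioo_subset_Icc_self hx)).differentiableAt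
  have hφx := differentiableAt_phi hFx (hf.differentiableAt hnhds) (hf0 x (Ioo_subset_Icc_self hx))
  exact ((hφx.mul hFx).add (differentiableAt_id.mul ((differentiableAt_const 1).sub hFx)))
    |>.congr_of_eventuallyEq
      (Filter.eventuallyEq_of_mem hnhds (eqOn_Gfun hF hf.continuousOn hf0 hFhi))

theorem phi_self (hFhi : F vhi = 1) : phi F f vhi = vhi := by
  simp [phi, hFhi]

theorem Gfun_self (hFhi : F vhi = 1) : Gfun F f vhi vhi = vhi := by
  simp [Gfun, phi_self hFhi, hFhi]

theorem bounds_of_mem_Ioo {vlo vM v : ℝ} (hvlo : 0 ≤ vlo) (hFlo : F vlo = 0) (hFhi : F vhi = 1)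
    (hFmono : StrictMonoOn F (Icc vlo vhi)) (hreg : StrictMonoOn (phi F f) (Icc vlo vhi))
    (hvM : IsLeast {v ∈ Icc vlo vhi | 0 ≤ phi F f v} vM)
    (hG : EqOn (Gfun F f vhi) (fun v => phi F f v * F v + v * (1 - F v)) (Icc vlo vhi))
    (hv : v ∈ Ioo vM vhi) : 0 < v ∧ 0 < F v ∧ F v < 1 ∧ 0 < Gfun F f vhi v := by
  obtain ⟨⟨⟨hlo, hhi⟩, hφM⟩, -⟩ := hvM
  have hvI : v ∈ Icc vlo vhi := ⟨hlo.trans hv.1.le, hv.2.le⟩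
  have hv0 : 0 < v := (hvlo.trans hlo).trans_lt hv.1
  have hφ : 0 < phi F f v := hφM.trans_lt (hreg ⟨hlo, hhi⟩ hvI hv.1)
  have hF0 : 0 < F v := hFlo ▸ hFmono (left_mem_Icc.2 (hlo.trans hhi)) hvI (hlo.trans_lt hv.1)
  have hF1 : F v < 1 := hFhi ▸ hFmono hvI (right_mem_Icc.2 (hlo.trans hhi)) hv.2
  refine ⟨hv0, hF0, hF1, ?_⟩
  rw [hG hvI]
  nlinarith [mul_pos hφ hF0, mul_pos hv0 (sub_pos.2 hF1)]

end VirtualValue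

theorem stmt_14_general
    (vlo vhi : ℝ) (hvlo : 0 ≤ vlo)
    (F f : ℝ → ℝ)
    (hFlo : F vlo = 0) (hFhi : F vhi = 1)
    (hFderiv : ∀ v ∈ Set.Icc vlo vhi, HasDerivAt F (f v) v)
    (hfpos : ∀ v ∈ Set.Icc vlo vhi, 0 < f v)
    (hfdiff : DifferentiableOn ℝ f (Set.Icc vlo vhi))
    (hreg : StrictMonoOn (phi F f) (Set.Icc vlo vhi))
    (vM : ℝ) (hvM : IsLeast {v ∈ Set.Icc vlo vhi | 0 ≤ phi F f v} vM)
    (FInv : ℝ → ℝ)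
    (θ : ℝ → ℝ)
    (hθ : ∀ k ∈ Set.Ioo (0:ℝ) 1, θ k ∈ Set.Icc vlo vhi ∧
      k * Gfun F f vhi (θ k) = phi F f (θ k) * (F (θ k)) ^ 2)
    (hθuniq : ∀ k ∈ Set.Ioo (0:ℝ) 1, ∀ v ∈ Set.Icc vlo vhi,
      k * Gfun F f vhi v = phi F f v * (F v) ^ 2 → v = θ k)
    (hθloc : ∀ k ∈ Set.Ioo (0:ℝ) 1, θ k ∈ Set.Ioo (max vM (FInv k)) vhi)
    (hcond : ∀ v ∈ Set.Ioo vM vhi,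
      v * f v / (1 - F v) + v * deriv (Gfun F f vhi) v / Gfun F f vhi v ≥ 2) :
    AntitoneOn (fun k => θ k * (1 - k / F (θ k))) (Set.Ioo (0:ℝ) 1) ∧
      (∀ k' ∈ Set.Ioo (0:ℝ) 1, ∀ k'' ∈ Set.Ioo (0:ℝ) 1, k' ≤ k'' →
        ∀ v : ℝ, θ k' < v → θ k'' < v →
          v - θ k' * (1 - k' / F (θ k')) ≤ v - θ k'' * (1 - k'' / F (θ k''))) := by
  have hFcont : ContinuousOn F (Icc vlo vhi) := fun v hv =>
    (hFderiv v hv).continuousAt.continuousWithinAt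
  have hf0 : ∀ v ∈ Icc vlo vhi, f v ≠ 0 := fun v hv => (hfpos v hv).ne'
  have hG := eqOn_Gfun hFderiv hfdiff.continuousOn hf0 hFhi
  have hIoo : Ioo vM vhi ⊆ Ioo vlo vhi := Ioo_subset_Ioo_left hvM.1.1.1
  have hθIoo : MapsTo θ (Ioo 0 1) (Ioo vM vhi) := fun k hk =>
    ⟨(le_max_left _ _).trans_lt (hθloc k hk).1, (hθloc k hk).2⟩
  have hpos : ∀ v ∈ Ioo vM vhi, 0 < v ∧ 0 < F v ∧ F v < 1 ∧ 0 < Gfun F f vhi v := fun v =>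
    bounds_of_mem_Ioo hvlo hFlo hFhi (strictMonoOn_Icc_of_hasDerivAt_pos hFderiv hfpos) hreg hvM hG
  have hH : AntitoneOn (fun v => v ^ 2 * (1 - F v) / Gfun F f vhi v) (Ioo vM vhi) :=
    antitoneOn_sq_mul_one_sub_div (fun v hv => hFderiv v (Ioo_subset_Icc_self (hIoo hv)))
      (fun v hv => (differentiableAt_Gfun hFderiv hfdiff hf0 hFhi (hIoo hv)).differentiableWithinAt)
      (fun v hv => (hpos v hv).1.le) (fun v hv => (hpos v hv).2.2.1)
      (fun v hv => (hpos v hv).2.2.2) hcond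
  have hθmono : StrictMonoOn θ (Ioo 0 1) :=
    strictMonoOn_of_unique_root (K := fun v => phi F f v * F v ^ 2)
      (continuousOn_Gfun hFderiv hfdiff.continuousOn hf0 hFhi)
      ((continuousOn_phi hFcont hfdiff.continuousOn hf0).mul (hFcont.pow 2))
      (fun k hk => ⟨(hθ k hk).1, (hpos _ (hθIoo hk)).2.2.2, (hθ k hk).2⟩)
      (fun k hk => by
        simp only [Gfun_self hFhi, phi_self hFhi, hFhi]
        nlinarith [hk.2, (hpos _ (hθIoo hk)).1.trans (hθIoo hk).2]) hθuniq
  have hprice : ∀ k ∈ Ioo (0 : ℝ) 1,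
      θ k * (1 - k / F (θ k)) = θ k ^ 2 * (1 - F (θ k)) / Gfun F f vhi (θ k) := fun k hk =>
    have hθk := hpos _ (hθIoo hk)
    price_eq_of_foc hθk.2.1.ne' hθk.2.2.2.ne' (hθ k hk).2 (hG (hθ k hk).1)
  have hanti : AntitoneOn (fun k => θ k * (1 - k / F (θ k))) (Ioo 0 1) := fun k₁ hk₁ k₂ hk₂ hk => by
    simp only [hprice k₁ hk₁, hprice k₂ hk₂]
    exact hH (hθIoo hk₁) (hθIoo hk₂) (hθmono.monotoneOn hk₁ hk₂ hk)
  exact ⟨hanti, fun k' hk' k'' hk'' hk v _ _ => sub_le_sub_left (hanti hk' hk'' hk) v⟩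

/-- if `v·f(v)/(1 − F(v)) + v·G'(v)/G(v) ≥ 2` for all `v ∈ (vᴹ, v̄)`,
then the posted price `p(k) = ϑ(k)·(1 − k/F(ϑ(k)))` is non-increasing in `k` on `(0,1)`;
consequently, for every capacity and every type strictly above the cutoff, the consumer
surplus `U(v,k) = v − p(k)` is nondecreasing in `k`. -/
theorem stmt_14
    (vlo vhi : ℝ) (hvlo : 0 ≤ vlo) (hlt : vlo < vhi)
    (F f : ℝ → ℝ) (hFmono : Monotone F)
    (hFlo : F vlo = 0) (hFhi : F vhi = 1)
    (hFderiv : ∀ v ∈ Set.Icc vlo vhi, HasDerivAt F (f v) v)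
    (hfpos : ∀ v ∈ Set.Icc vlo vhi, 0 < f v)
    (hfdiff : DifferentiableOn ℝ f (Set.Icc vlo vhi))
    (hreg : StrictMonoOn (phi F f) (Set.Icc vlo vhi))
    (vM : ℝ) (hvM : IsLeast {v ∈ Set.Icc vlo vhi | 0 ≤ phi F f v} vM)
    (FInv : ℝ → ℝ)
    (hFInv : ∀ k ∈ Set.Ioo (0:ℝ) 1, FInv k ∈ Set.Icc vlo vhi ∧ F (FInv k) = k)
    (θ : ℝ → ℝ)
    (hθ : ∀ k ∈ Set.Ioo (0:ℝ) 1, θ k ∈ Set.Icc vlo vhi ∧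
      k * Gfun F f vhi (θ k) = phi F f (θ k) * (F (θ k)) ^ 2)
    (hθuniq : ∀ k ∈ Set.Ioo (0:ℝ) 1, ∀ v ∈ Set.Icc vlo vhi,
      k * Gfun F f vhi v = phi F f v * (F v) ^ 2 → v = θ k)
    (hθloc : ∀ k ∈ Set.Ioo (0:ℝ) 1, θ k ∈ Set.Ioo (max vM (FInv k)) vhi)
    (hcond : ∀ v ∈ Set.Ioo vM vhi,
      v * f v / (1 - F v) + v * deriv (Gfun F f vhi) v / Gfun F f vhi v ≥ 2) :
    AntitoneOn (fun k => θ k * (1 - k / F (θ k))) (Set.Ioo (0:ℝ) 1) ∧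
      (∀ k' ∈ Set.Ioo (0:ℝ) 1, ∀ k'' ∈ Set.Ioo (0:ℝ) 1, k' ≤ k'' →
        ∀ v : ℝ, θ k' < v → θ k'' < v →
          v - θ k' * (1 - k' / F (θ k')) ≤ v - θ k'' * (1 - k'' / F (θ k''))) :=
  stmt_14_general vlo vhi hvlo F f hFlo hFhi hFderiv hfpos hfdiff hreg vM hvM FInv θ hθ hθuniq hθloc
    hcond
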